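/- Let n ∈ ℕ, s ∈ (0,1), d > 0 and R > 0. Let Ω ⊂ ℝⁿ be a Lebesgue-measurable set with Ω ⊆ B_R(0), and let W ⊆ ℝⁿ be a Lebesgue-measurable set with dist(W, Ω) ≥ d. Then: (i) for every u ∈ L²(Ω) and every x ∈ ℝⁿ with dist(x, Ω) ≥ d, |∫_Ω u(y) |x − y|^{−(n+2s)} dy| ≤ |Ω|^{1/2} (max{d, |x| − R})^{−(n+2s)} ‖u‖_{L²(Ω)}, where |Ω| is the Lebesgue measure of Ω; and (ii) there exists a constant C > 0, depending only on n, s, d, R and |Ω|, such that for every u ∈ L²(Ω), ( ∫_W | ∫_Ω u(y) |x − y|^{−(n+2s)} dy |² dx )^{1/2} ≤ C ‖u‖_{L²(Ω)}. -/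

import Mathlib

open MeasureTheory Filter Topology
open scoped RealInnerProductSpace NNReal ENNReal Classical

noncomputable section

/-- Euclidean space `ℝⁿ`. -/
abbrev EucSp (n : ℕ) := EuclideanSpace ℝ (Fin n)

/-- `w` is (a representative of) the Fourier transform of `u`, in the sense of
tempered distributions: `∫ u ⬝ 𝓕 φ = ∫ w ⬝ φ` for every Schwartz function `φ`. -/
def IsFourierPair {n : ℕ} (u : EucSp n → ℝ) (w : EucSp n → ℂ) : Prop :=
  ∀ φ : SchwartzMap (EucSp n) ℂ,
    Integrable (fun x => (u x : ℂ) * VectorFourier.fourierIntegral Real.fourierChar volume (innerₗ (EucSp n)) (⇑φ) x) ∧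
    Integrable (fun ξ => w ξ * φ ξ) ∧
    ∫ x, (u x : ℂ) * VectorFourier.fourierIntegral Real.fourierChar volume (innerₗ (EucSp n)) (⇑φ) x = ∫ ξ, w ξ * φ ξ

/-- A choice of Fourier transform representative of `u`. -/
def fourierRep {n : ℕ} (u : EucSp n → ℝ) : EucSp n → ℂ :=
  if h : ∃ w, IsFourierPair u w then h.choose else 0

/-- Membership in the fractional Sobolev space `H^s(ℝⁿ)`:
the Fourier transform exists as a function and has finite weighted `L²` norm. -/
def memHs (n : ℕ) (s : ℝ) (u : EucSp n → ℝ) : Prop :=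
  ∃ w, IsFourierPair u w ∧
    Integrable (fun ξ : EucSp n => (1 + ‖ξ‖ ^ 2) ^ s * ‖w ξ‖ ^ 2)

/-- The `H^s(ℝⁿ)` norm, `(∫ (1+|ξ|²)^s |û(ξ)|² dξ)^{1/2}`. -/
def sobNorm (n : ℕ) (s : ℝ) (u : EucSp n → ℝ) : ℝ :=
  Real.sqrt (∫ ξ : EucSp n, (1 + ‖ξ‖ ^ 2) ^ s * ‖fourierRep u ξ‖ ^ 2)

/-- The `H^s(ℝⁿ)` (real) inner product. -/
def sobInner (n : ℕ) (s : ℝ) (u v : EucSp n → ℝ) : ℝ :=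
  (∫ ξ : EucSp n,
      (((1 + ‖ξ‖ ^ 2) ^ s : ℝ) : ℂ) * (fourierRep u ξ * starRingEnd ℂ (fourierRep v ξ))).re

/-- Smooth compactly supported functions with support contained in `U`. -/
def testFun {n : ℕ} (U : Set (EucSp n)) (φ : EucSp n → ℝ) : Prop :=
  ContDiff ℝ (⊤ : ℕ∞) φ ∧ HasCompactSupport φ ∧ tsupport φ ⊆ U

/-- `H̃^s(U)`: the closure of `C_c^∞(U)` in `H^s(ℝⁿ)`. -/
def memTildeHs (n : ℕ) (s : ℝ) (U : Set (EucSp n)) (u : EucSp n → ℝ) : Prop :=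
  memHs n s u ∧ ∃ seq : ℕ → EucSp n → ℝ, (∀ k, testFun U (seq k)) ∧
    Tendsto (fun k => sobNorm n s (u - seq k)) atTop (𝓝 0)

/-- `H^s_{cl(U)}`: elements of `H^s(ℝⁿ)` supported in the closure of `U`. -/
def memHsSupp (n : ℕ) (s : ℝ) (U : Set (EucSp n)) (u : EucSp n → ℝ) : Prop :=
  memHs n s u ∧ tsupport u ⊆ closure U

/-- The pairing `((−Δ)^{s/2} u, (−Δ)^{s/2} v)_{L²(ℝⁿ)} = ⟨(−Δ)^s u, v⟩`,
computed on the Fourier side with the multiplier `|ξ|^{2s}`. -/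
def fracPair (n : ℕ) (s : ℝ) (u v : EucSp n → ℝ) : ℝ :=
  (∫ ξ : EucSp n,
      ((‖ξ‖ ^ (2 * s) : ℝ) : ℂ) * (fourierRep u ξ * starRingEnd ℂ (fourierRep v ξ))).re

/-- The bilinear form `B_q(u,w) = ((−Δ)^{s/2}u,(−Δ)^{s/2}w)_{ℝⁿ} + (qu,w)_Ω`. -/
def bForm (n : ℕ) (s : ℝ) (Ω : Set (EucSp n)) (q u w : EucSp n → ℝ) : ℝ :=
  fracPair n s u w + ∫ x in Ω, q x * u x * w x

/-- `u ∈ H^s(ℝⁿ)` solves `((−Δ)^s + q) u = 0` in `Ω` with `u = f` in `Ω_e`. -/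
def IsSolution (n : ℕ) (s : ℝ) (Ω : Set (EucSp n)) (q u f : EucSp n → ℝ) : Prop :=
  memHs n s u ∧ memTildeHs n s Ω (u - f) ∧
    ∀ w, memTildeHs n s Ω w → bForm n s Ω q u w = 0

/-- Condition (⋆): zero is not a Dirichlet eigenvalue of `(−Δ)^s + q` in `Ω`. -/
def CondStar (n : ℕ) (s : ℝ) (Ω : Set (EucSp n)) (q : EucSp n → ℝ) : Prop :=
  ∀ u, IsSolution n s Ω q u 0 → u =ᵐ[volume] (0 : EucSp n → ℝ)

/-- The Dirichlet-to-Neumann pairing `⟨Λ_q f, g⟩ = B_q(u_f, g)`. -/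
def dtnPair (n : ℕ) (s : ℝ) (Ω : Set (EucSp n)) (q f g : EucSp n → ℝ) : ℝ :=
  if h : ∃ u, IsSolution n s Ω q u f then bForm n s Ω q h.choose g else 0

/-- The norm in `H^{-s}(U) = (H̃^s(U))^*` of a functional `T`. -/
def dualNormOn (n : ℕ) (s : ℝ) (U : Set (EucSp n)) (T : (EucSp n → ℝ) → ℝ) : ℝ :=
  sSup ((fun φ => |T φ|) '' {φ | memTildeHs n s U φ ∧ sobNorm n s φ ≤ 1})

/-- The `L²(Ω)` inner product. -/
def l2InnerOn {n : ℕ} (Ω : Set (EucSp n)) (u v : EucSp n → ℝ) : ℝ := ∫ x in Ω, u x * v x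

/-- The `L²(Ω)` norm. -/
def l2NormOn {n : ℕ} (Ω : Set (EucSp n)) (u : EucSp n → ℝ) : ℝ :=
  Real.sqrt (∫ x in Ω, u x ^ 2)

/-- The `L^∞(Ω)` norm. -/
def linfNormOn {n : ℕ} (Ω : Set (EucSp n)) (q : EucSp n → ℝ) : ℝ :=
  (eLpNorm q ⊤ (volume.restrict Ω)).toReal

/-- Membership in `L^∞(Ω)`. -/
def MemLinfOn {n : ℕ} (Ω : Set (EucSp n)) (q : EucSp n → ℝ) : Prop :=
  MemLp q ⊤ (volume.restrict Ω)

/-- `Ω` has smooth boundary: locally a sublevel set of a smooth function with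
nonvanishing gradient. -/
def HasSmoothBoundary {n : ℕ} (Ω : Set (EucSp n)) : Prop :=
  ∀ x ∈ frontier Ω, ∃ (U : Set (EucSp n)) (f : EucSp n → ℝ),
    IsOpen U ∧ x ∈ U ∧ ContDiff ℝ (⊤ : ℕ∞) f ∧ (∀ y ∈ U, fderiv ℝ f y ≠ 0) ∧
    Ω ∩ U = {y ∈ U | f y < 0}

/-- `Ω` is a Lipschitz domain: locally the hypograph of a Lipschitz function. -/
def IsLipschitzDomain {n : ℕ} (Ω : Set (EucSp n)) : Prop :=
  ∀ x ∈ frontier Ω, ∃ (U : Set (EucSp n)) (v : EucSp n) (φ : EucSp n → ℝ) (K : ℝ≥0),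
    IsOpen U ∧ x ∈ U ∧ ‖v‖ = 1 ∧ LipschitzWith K φ ∧ (∀ (y : EucSp n) (t : ℝ), φ (y + t • v) = φ y) ∧
    Ω ∩ U = {y ∈ U | ⟪y, v⟫ < φ y}

/-- `q` belongs to the span of the functions `g 0, …, g (m-1)`. -/
def inSpan {n m : ℕ} (g : Fin m → EucSp n → ℝ) (q : EucSp n → ℝ) : Prop :=
  ∃ a : Fin m → ℝ, q = fun x => ∑ j, a j * g j x

/-- `Z₂`: the space of Dirichlet eigenfunctions of `(−Δ)^s + q` with eigenvalue zero. -/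
def kerSp (n : ℕ) (s : ℝ) (Ω : Set (EucSp n)) (q : EucSp n → ℝ) : Set (EucSp n → ℝ) :=
  {z | memTildeHs n s Ω z ∧ ∀ w, memTildeHs n s Ω w → bForm n s Ω q z w = 0}

/-- `H₁ = {f ∈ H̃^s(W) : (f, (−Δ)^s z)_W = 0 for all z ∈ Z₂}`. -/
def memH1 (n : ℕ) (s : ℝ) (Ω W : Set (EucSp n)) (q f : EucSp n → ℝ) : Prop :=
  memTildeHs n s W f ∧ ∀ z ∈ kerSp n s Ω q, fracPair n s z f = 0

/-- `H₂`: the `L²(Ω)`-orthogonal complement of `Z₂`. -/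
def memH2 (n : ℕ) (s : ℝ) (Ω : Set (EucSp n)) (q v : EucSp n → ℝ) : Prop :=
  MemLp v 2 (volume.restrict Ω) ∧ ∀ z ∈ kerSp n s Ω q, l2InnerOn Ω v z = 0

/-- `a = A f`: `a` is the `L²(Ω)`-orthogonal projection onto `H₂` of (the restriction to `Ω`
of) a representative `u` of `P_q f`. -/
def IsAImage (n : ℕ) (s : ℝ) (Ω W : Set (EucSp n)) (q f a : EucSp n → ℝ) : Prop :=
  memH1 n s Ω W q f ∧ ∃ u z, IsSolution n s Ω q u f ∧ z ∈ kerSp n s Ω q ∧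
    a = u - z ∧ ∀ z' ∈ kerSp n s Ω q, l2InnerOn Ω a z' = 0

/-- A Cauchy data pair: an element of `H̃^s(W) × H^{-s}(W)`. -/
abbrev CPair (n : ℕ) := (EucSp n → ℝ) × ((EucSp n → ℝ) → ℝ)

/-- The Cauchy data set `𝒞` of `(−Δ)^s + q` in `Ω`, measured in `W`. -/
def cauchyData (n : ℕ) (s : ℝ) (Ω W : Set (EucSp n)) (q : EucSp n → ℝ) :
    Set (CPair n) :=
  {p | ∃ u f, memTildeHs n s W f ∧ IsSolution n s Ω q u f ∧
    p.1 = f ∧ p.2 = fun φ => fracPair n s u φ}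

/-- `‖(f,g)‖_H = ‖f‖_{H̃^s(W)} + ‖g‖_{H^{-s}(W)}`. -/
def cauchyNorm (n : ℕ) (s : ℝ) (W : Set (EucSp n)) (p : CPair n) : ℝ :=
  sobNorm n s p.1 + dualNormOn n s W p.2

/-- `sup_{0 ≠ h ∈ B} inf_{k ∈ A} ‖h − k‖_H / ‖h‖_H`. -/
def cauchyGap (n : ℕ) (s : ℝ) (W : Set (EucSp n)) (A B : Set (CPair n)) : ℝ :=
  sSup ((fun h => sInf ((fun k => cauchyNorm n s W (h - k) / cauchyNorm n s W h) '' A)) ''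
    {h ∈ B | h ≠ 0})

/-- The distance between two Cauchy data sets. -/
def cauchyDist (n : ℕ) (s : ℝ) (W : Set (EucSp n)) (A B : Set (CPair n)) : ℝ :=
  max (cauchyGap n s W A B) (cauchyGap n s W B A)

end
/-- **Kernel estimates for the fractional Laplacian kernel away from `Ω`
(pointwise bound and `L²(W) → L²(Ω)` boundedness).** -/
theorem kernel_estimates
    (n : ℕ) (s : ℝ) (hs : s ∈ Set.Ioo (0 : ℝ) 1)
    (d R : ℝ) (hd : 0 < d) (hR : 0 < R)
    (Ω W : Set (EucSp n)) (hΩm : MeasurableSet Ω) (hΩR : Ω ⊆ Metric.ball 0 R)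
    (hWm : MeasurableSet W) (hdist : ∀ x ∈ W, ∀ y ∈ Ω, d ≤ dist x y) :
    (∀ u : EucSp n → ℝ, MemLp u 2 (volume.restrict Ω) →
      ∀ x : EucSp n, (∀ y ∈ Ω, d ≤ dist x y) →
        |∫ y in Ω, u y * ‖x - y‖ ^ (-((n : ℝ) + 2 * s))| ≤
          (volume Ω).toReal ^ ((1 : ℝ) / 2) *
            (max d (‖x‖ - R)) ^ (-((n : ℝ) + 2 * s)) * l2NormOn Ω u) ∧
    ∃ C > (0 : ℝ), ∀ u : EucSp n → ℝ, MemLp u 2 (volume.restrict Ω) →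
      Real.sqrt (∫ x in W, (∫ y in Ω, u y * ‖x - y‖ ^ (-((n : ℝ) + 2 * s))) ^ 2) ≤
        C * l2NormOn Ω u := by
  obtain ⟨hs0, hs1⟩ := hs
  set α : ℝ := (n : ℝ) + 2 * s with hα_def
  have hα : 0 < α := by positivity
  have hΩfin : volume Ω < ⊤ :=
    lt_of_le_of_lt (measure_mono hΩR) measure_ball_lt_top
  haveI : IsFiniteMeasure (volume.restrict Ω) :=
    ⟨by rwa [Measure.restrict_apply_univ]⟩
  have hAnn : (0:ℝ) ≤ (volume Ω).toReal ^ ((1 : ℝ) / 2) := by positivity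
  -- Part (i)
  have key : ∀ u : EucSp n → ℝ, MemLp u 2 (volume.restrict Ω) →
      ∀ x : EucSp n, (∀ y ∈ Ω, d ≤ dist x y) →
        |∫ y in Ω, u y * ‖x - y‖ ^ (-α)| ≤
          (volume Ω).toReal ^ ((1 : ℝ) / 2) * (max d (‖x‖ - R)) ^ (-α) * l2NormOn Ω u := by
    intro u hu x hx
    set M : ℝ := max d (‖x‖ - R) with hM
    have hM0 : 0 < M := lt_max_iff.2 (Or.inl hd)
    have hbound : ∀ y ∈ Ω, M ≤ ‖x - y‖ := by
      intro y hy
      have h1 : d ≤ ‖x - y‖ := by simpa [dist_eq_norm] using hx y hy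
      have h2 : ‖y‖ < R := by simpa using hΩR hy
      have h3 := norm_sub_norm_le x y
      exact max_le h1 (by linarith)
    have hu_int : Integrable u (volume.restrict Ω) := hu.integrable one_le_two
    have habs : ∀ᵐ y ∂(volume.restrict Ω),
        ‖u y * ‖x - y‖ ^ (-α)‖ ≤ |u y| * M ^ (-α) := by
      refine (ae_restrict_iff' hΩm).2 (Filter.Eventually.of_forall fun y hy => ?_)
      rw [norm_mul, Real.norm_eq_abs, Real.norm_eq_abs,
        abs_of_nonneg (Real.rpow_nonneg (norm_nonneg _) _)]
      have : ‖x - y‖ ^ (-α) ≤ M ^ (-α) :=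
        Real.rpow_le_rpow_of_nonpos hM0 (hbound y hy) (neg_nonpos.2 hα.le)
      exact mul_le_mul_of_nonneg_left this (abs_nonneg _)
    have h1 : |∫ y in Ω, u y * ‖x - y‖ ^ (-α)| ≤ ∫ y in Ω, |u y| * M ^ (-α) := by
      rw [← Real.norm_eq_abs]
      exact norm_integral_le_of_norm_le (hu_int.abs.mul_const _) habs
    have h2 : ∫ y in Ω, |u y| * M ^ (-α) = M ^ (-α) * ∫ y in Ω, |u y| := by
      rw [integral_mul_const]; ring
    -- Cauchy–Schwarz
    have hCS : ∫ y in Ω, |u y| ≤ (volume Ω).toReal ^ ((1 : ℝ) / 2) * l2NormOn Ω u := by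
      have hconj : Real.HolderConjugate 2 2 := Real.holderConjugate_iff.mpr ⟨one_lt_two, by norm_num⟩
      have habs2 : MemLp (fun y => |u y|) (ENNReal.ofReal 2) (volume.restrict Ω) := by
        rw [show ENNReal.ofReal 2 = 2 by norm_num]
        exact hu.abs
      have hone : MemLp (fun _ : EucSp n => (1:ℝ)) (ENNReal.ofReal 2) (volume.restrict Ω) :=
        memLp_const 1
      have h := integral_mul_le_Lp_mul_Lq_of_nonneg hconj
        (Filter.Eventually.of_forall fun y => abs_nonneg (u y))
        (Filter.Eventually.of_forall fun _ => zero_le_one) habs2 hone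
      simp only [mul_one] at h
      have e1 : ∫ y in Ω, |u y| ^ (2:ℝ) = ∫ y in Ω, u y ^ 2 := by
        refine integral_congr_ae (Filter.Eventually.of_forall fun y => ?_)
        show |u y| ^ (2:ℝ) = u y ^ 2
        rw [show (2:ℝ) = ((2:ℕ):ℝ) by norm_num, Real.rpow_natCast, sq_abs]
      have e2 : ∫ _ in Ω, (1:ℝ) ^ (2:ℝ) = (volume Ω).toReal := by
        simp [Real.one_rpow, Measure.restrict_apply_univ, Measure.real]
      rw [e1, e2] at h
      calc ∫ y in Ω, |u y| ≤ (∫ y in Ω, u y ^ 2) ^ (1/2:ℝ) * (volume Ω).toReal ^ (1/2:ℝ) := h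
        _ = (volume Ω).toReal ^ ((1:ℝ)/2) * l2NormOn Ω u := by
            rw [l2NormOn, Real.sqrt_eq_rpow]; ring
    have hMnn : (0:ℝ) ≤ M ^ (-α) := Real.rpow_nonneg hM0.le _
    calc |∫ y in Ω, u y * ‖x - y‖ ^ (-α)| ≤ ∫ y in Ω, |u y| * M ^ (-α) := h1
      _ = M ^ (-α) * ∫ y in Ω, |u y| := h2
      _ ≤ M ^ (-α) * ((volume Ω).toReal ^ ((1:ℝ)/2) * l2NormOn Ω u) :=
          mul_le_mul_of_nonneg_left hCS hMnn
      _ = (volume Ω).toReal ^ ((1:ℝ)/2) * M ^ (-α) * l2NormOn Ω u := by ring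
  refine ⟨key, ?_⟩
  -- Part (ii)
  set c0 : ℝ := min (d / (2 + 2 * R)) (1/2) with hc0_def
  have hc0 : 0 < c0 := lt_min (by positivity) (by norm_num)
  have hlow : ∀ x : EucSp n, c0 * (1 + ‖x‖) ≤ max d (‖x‖ - R) := by
    intro x
    rcases le_or_gt ‖x‖ (1 + 2 * R) with h | h
    · refine le_trans ?_ (le_max_left _ _)
      have h1 : c0 ≤ d / (2 + 2 * R) := min_le_left _ _
      have h2 : (1:ℝ) + ‖x‖ ≤ 2 + 2 * R := by linarith
      calc c0 * (1 + ‖x‖) ≤ (d / (2 + 2 * R)) * (2 + 2 * R) :=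
            mul_le_mul h1 h2 (by positivity) (by positivity)
        _ = d := by field_simp
    · refine le_trans ?_ (le_max_right _ _)
      have h1 : c0 ≤ 1/2 := min_le_right _ _
      have h2 : c0 * (1 + ‖x‖) ≤ (1/2) * (1 + ‖x‖) :=
        mul_le_mul_of_nonneg_right h1 (by positivity)
      linarith
  have hdim : ((Module.finrank ℝ (EucSp n)) : ℝ) < 2 * α := by
    rw [finrank_euclideanSpace_fin]
    rw [hα_def]; push_cast; nlinarith [Nat.cast_nonneg (α := ℝ) n]
  have hInt : Integrable (fun x : EucSp n => (1 + ‖x‖) ^ (-(2 * α))) :=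
    integrable_one_add_norm hdim
  set J : ℝ := ∫ x : EucSp n, (1 + ‖x‖) ^ (-(2 * α)) with hJ_def
  have hJ0 : 0 ≤ J := integral_nonneg fun x => Real.rpow_nonneg (by positivity) _
  set A : ℝ := (volume Ω).toReal ^ ((1:ℝ)/2) with hA_def
  set D : ℝ := c0 ^ (-(2 * α)) * J with hD_def
  have hD0 : 0 ≤ D := mul_nonneg (Real.rpow_nonneg hc0.le _) hJ0
  set C : ℝ := max 1 (A * Real.sqrt D) with hC_def
  have hC0 : 0 < C := lt_of_lt_of_le one_pos (le_max_left _ _)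
  refine ⟨C, hC0, fun u hu => ?_⟩
  set N : ℝ := l2NormOn Ω u with hN_def
  have hN0 : 0 ≤ N := Real.sqrt_nonneg _
  -- pointwise bound on W
  have hptw : ∀ᵐ x ∂(volume.restrict W),
      (∫ y in Ω, u y * ‖x - y‖ ^ (-α)) ^ 2 ≤
        (A * N) ^ 2 * c0 ^ (-(2 * α)) * (1 + ‖x‖) ^ (-(2 * α)) := by
    refine (ae_restrict_iff' hWm).2 (Filter.Eventually.of_forall fun x hx => ?_)
    set M : ℝ := max d (‖x‖ - R) with hM
    have hM0 : 0 < M := lt_max_iff.2 (Or.inl hd)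
    have hb := key u hu x (fun y hy => hdist x hx y hy)
    have hMsq : (M ^ (-α)) ^ 2 = M ^ (-(2 * α)) := by
      rw [sq, ← Real.rpow_add hM0]; ring_nf
    have hM2 : M ^ (-(2 * α)) ≤ c0 ^ (-(2 * α)) * (1 + ‖x‖) ^ (-(2 * α)) := by
      have h1 : (c0 * (1 + ‖x‖)) ^ (-(2 * α)) ≥ M ^ (-(2 * α)) :=
        Real.rpow_le_rpow_of_nonpos (by positivity) (hlow x) (by linarith)
      rwa [Real.mul_rpow hc0.le (by positivity)] at h1
    have habs : |∫ y in Ω, u y * ‖x - y‖ ^ (-α)| ≤ A * M ^ (-α) * N := hb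
    calc (∫ y in Ω, u y * ‖x - y‖ ^ (-α)) ^ 2
        = |∫ y in Ω, u y * ‖x - y‖ ^ (-α)| ^ 2 := (sq_abs _).symm
      _ ≤ (A * M ^ (-α) * N) ^ 2 := by
          have h0 : (0:ℝ) ≤ A * M ^ (-α) * N :=
            mul_nonneg (mul_nonneg hAnn (Real.rpow_nonneg hM0.le _)) hN0
          exact pow_le_pow_left₀ (abs_nonneg _) habs 2
      _ = (A * N) ^ 2 * (M ^ (-α)) ^ 2 := by ring
      _ = (A * N) ^ 2 * M ^ (-(2 * α)) := by rw [hMsq]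
      _ ≤ (A * N) ^ 2 * (c0 ^ (-(2 * α)) * (1 + ‖x‖) ^ (-(2 * α))) :=
          mul_le_mul_of_nonneg_left hM2 (sq_nonneg _)
      _ = (A * N) ^ 2 * c0 ^ (-(2 * α)) * (1 + ‖x‖) ^ (-(2 * α)) := by ring
  have hIntW : Integrable
      (fun x : EucSp n => (A * N) ^ 2 * c0 ^ (-(2 * α)) * (1 + ‖x‖) ^ (-(2 * α)))
      (volume.restrict W) :=
    (hInt.const_mul _).restrict
  have hmono : ∫ x in W, (∫ y in Ω, u y * ‖x - y‖ ^ (-α)) ^ 2 ≤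
      ∫ x in W, (A * N) ^ 2 * c0 ^ (-(2 * α)) * (1 + ‖x‖) ^ (-(2 * α)) :=
    integral_mono_of_nonneg (Filter.Eventually.of_forall fun x => sq_nonneg _) hIntW hptw
  have hWle : ∫ x in W, (A * N) ^ 2 * c0 ^ (-(2 * α)) * (1 + ‖x‖) ^ (-(2 * α)) ≤
      (A * N) ^ 2 * c0 ^ (-(2 * α)) * J := by
    have := setIntegral_le_integral (μ := volume) (s := W)
      ((hInt.const_mul ((A * N) ^ 2 * c0 ^ (-(2 * α)))))
      (Filter.Eventually.of_forall fun x =>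
        mul_nonneg (mul_nonneg (sq_nonneg _) (Real.rpow_nonneg hc0.le _))
          (Real.rpow_nonneg (by positivity) _))
    calc ∫ x in W, (A * N) ^ 2 * c0 ^ (-(2 * α)) * (1 + ‖x‖) ^ (-(2 * α))
        ≤ ∫ x : EucSp n, (A * N) ^ 2 * c0 ^ (-(2 * α)) * (1 + ‖x‖) ^ (-(2 * α)) := this
      _ = (A * N) ^ 2 * c0 ^ (-(2 * α)) * J := by rw [integral_const_mul]
  have hfinal : ∫ x in W, (∫ y in Ω, u y * ‖x - y‖ ^ (-α)) ^ 2 ≤ (C * N) ^ 2 := by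
    have hCD : (A * Real.sqrt D) ^ 2 ≤ C ^ 2 := by
      have h1 : A * Real.sqrt D ≤ C := le_max_right _ _
      exact pow_le_pow_left₀ (mul_nonneg hAnn (Real.sqrt_nonneg _)) h1 2
    have hsq : (A * Real.sqrt D) ^ 2 = A ^ 2 * D := by
      rw [mul_pow, Real.sq_sqrt hD0]
    have : (A * N) ^ 2 * c0 ^ (-(2 * α)) * J ≤ (C * N) ^ 2 := by
      have : (A * N) ^ 2 * c0 ^ (-(2 * α)) * J = (A ^ 2 * D) * N ^ 2 := by
        rw [hD_def]; ring
      rw [this, mul_pow]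
      have := hCD
      rw [hsq] at this
      exact mul_le_mul_of_nonneg_right this (sq_nonneg _)
    linarith [hmono, hWle]
  calc Real.sqrt (∫ x in W, (∫ y in Ω, u y * ‖x - y‖ ^ (-α)) ^ 2)
      ≤ Real.sqrt ((C * N) ^ 2) := Real.sqrt_le_sqrt hfinal
    _ = C * N := Real.sqrt_sq (mul_nonneg hC0.le hN0)
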